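/- For every r ≥ 3 and ℓ ≥ 0, the (r, ℓ)-chain has a set R of ℓ+1 vertices such that for every vertex v ∈ R, the graph obtained from the (r, ℓ)-chain by deleting v contains a K_r-factor; explicitly, R consists of the ℓ−1 identified (shared) degree-(r−1) vertices together with the two unidentified endpoints of the missing edges in the first and last copy of K_{r+1}^− (and R is the single vertex when ℓ = 0). -/

import Mathlib

/-!
Statement 12: for every `r ≥ 3` and `ℓ ≥ 0`, the `(r, ℓ)`-chain has a set `R` of
`ℓ + 1` vertices such that deleting any single vertex of `R` leaves a graph containing a
`K_r`-factor.  Explicitly (in the canonical labelling of the `(r, ℓ)`-chain on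
`{0, …, rℓ}`), `R` consists of the `ℓ - 1` identified (shared) degree-`(r-1)` vertices
together with the two unidentified endpoints of the missing edges in the first and last
copies of `K_{r+1}⁻` — i.e. of the multiples of `r` — and `R` is the single vertex of
the chain when `ℓ = 0`.
-/
open Finset

/-- The canonical `(r, ℓ)`-chain: the graph on vertex set `{0, 1, …, rℓ}` obtained by
sequentially gluing `ℓ` copies of `K_{r+1}⁻` (the complete graph on `r+1` vertices minus
one edge).  The `j`-th copy (for `0 ≤ j < ℓ`) lives on the vertices `{rj, …, r(j+1)}`,
its missing edge being `{rj, r(j+1)}`; consecutive copies are glued at the common vertex,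
which is a degree-`(r-1)` endpoint of the missing edge in both copies.  The `(r,0)`-chain
is a single vertex. -/
def chainGraph (r ℓ : ℕ) : SimpleGraph (Fin (r * ℓ + 1)) where
  Adj a b := a ≠ b ∧ ∃ j : ℕ, j < ℓ ∧
    r * j ≤ a.val ∧ a.val ≤ r * (j + 1) ∧ r * j ≤ b.val ∧ b.val ≤ r * (j + 1) ∧
    ¬(a.val = r * j ∧ b.val = r * (j + 1)) ∧ ¬(b.val = r * j ∧ a.val = r * (j + 1))
  symm := ⟨by
    rintro a b ⟨hne, j, hj, h1, h2, h3, h4, h5, h6⟩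
    exact ⟨hne.symm, j, hj, h3, h4, h1, h2, h6, h5⟩⟩
  loopless := ⟨by rintro a ⟨hne, -⟩; exact hne rfl⟩

/-- The set of removable vertices of the canonical `(r, ℓ)`-chain: the `ℓ - 1` shared
(identified) degree-`(r-1)` vertices together with the two unidentified endpoints of the
missing edges of the first and last copy of `K_{r+1}⁻`; in the canonical labelling these
are exactly the multiples of `r`. -/
def chainR (r ℓ : ℕ) : Finset (Fin (r * ℓ + 1)) :=
  Finset.univ.filter (fun v => r ∣ v.val)

/-- `φ` is an embedding of the `(r, ℓ)`-chain into `G` as a subgraph (a copy of the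
`(r, ℓ)`-chain in `G`). -/
def IsChainEmb {V : Type} (G : SimpleGraph V) (r ℓ : ℕ) (φ : Fin (r * ℓ + 1) → V) : Prop :=
  Function.Injective φ ∧ ∀ a b, (chainGraph r ℓ).Adj a b → G.Adj (φ a) (φ b)

/-- The subgraph of `G` induced by the vertex set `U` contains a `K_r`-factor. -/
def HasKrFactorOn {V : Type} [DecidableEq V] (G : SimpleGraph V) (r : ℕ)
    (U : Finset V) : Prop :=
  ∃ P : Finset (Finset V),
    (∀ S ∈ P, G.IsNClique r S) ∧
    (∀ S ∈ P, ∀ T ∈ P, S ≠ T → Disjoint S T) ∧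
    P.biUnion id = U

/-!
Deleting the vertex `r * k` of the chain leaves `r ℓ` vertices, which split into `ℓ` cliques
of size `r`, one inside each copy of `K_{r+1}⁻`: the copies `j < k` give up their top vertex
`r (j + 1)` and the copies `j ≥ k` their bottom vertex `r j`. Each block thus avoids one
endpoint of the missing edge of its copy, so it is a clique, and consecutive blocks never
share the glued vertex.
-/

theorem Fin.card_filter_val {n : ℕ} (p : ℕ → Prop) [DecidablePred p] :
    #{i : Fin n | p i} = #{m ∈ range n | p m} := by
  rw [← image_fin_univ, filter_image, card_image_of_injective _ Fin.val_injective]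

theorem hasKrFactorOn_biUnion {V ι : Type} [DecidableEq V] {G : SimpleGraph V} {r : ℕ}
    {s : Finset ι} {B : ι → Finset V} (hB : ∀ i ∈ s, G.IsNClique r (B i))
    (hdisj : (s : Set ι).PairwiseDisjoint B) :
    HasKrFactorOn G r (s.biUnion B) := by
  refine ⟨s.image B, ?_, ?_, by rw [image_biUnion]; rfl⟩
  · simpa only [forall_mem_image] using hB
  · simp only [forall_mem_image]
    intro i hi j hj hne
    exact hdisj hi hj fun hij => hne (congrArg B hij)

theorem card_chainR {r ℓ : ℕ} (hr : 0 < r) : #(chainR r ℓ) = ℓ + 1 := by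
  have hmultiples : {m ∈ range (r * ℓ + 1) | r ∣ m} = (range (ℓ + 1)).image (r * ·) := by
    ext m
    simp only [mem_filter, mem_range, mem_image, Nat.lt_succ_iff]
    constructor
    · rintro ⟨hm, i, rfl⟩
      exact ⟨i, (Nat.mul_le_mul_left_iff hr).1 hm, rfl⟩
    · rintro ⟨i, hi, rfl⟩
      exact ⟨Nat.mul_le_mul_left r hi, dvd_mul_right r i⟩
  rw [chainR, Fin.card_filter_val, hmultiples,
    card_image_of_injective _ (mul_right_injective₀ hr.ne'), card_range]

namespace chainGraph

variable {r ℓ k : ℕ}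

/-- The first vertex of the `j`-th block once the vertex `r * k` is deleted. -/
def blockStart (r k j : ℕ) : ℕ := r * j + if j < k then 0 else 1

def block (r ℓ k j : ℕ) : Finset (Fin (r * ℓ + 1)) :=
  {v | v.val ∈ Ico (blockStart r k j) (blockStart r k j + r)}

theorem mem_block {j : ℕ} {v : Fin (r * ℓ + 1)} :
    v ∈ block r ℓ k j ↔ blockStart r k j ≤ v ∧ v < blockStart r k j + r := by
  simp [block]

theorem blockStart_add_le {j₁ j₂ : ℕ} (h : j₁ < j₂) :
    blockStart r k j₁ + r ≤ blockStart r k j₂ := by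
  have : r * (j₁ + 1) ≤ r * j₂ := Nat.mul_le_mul_left r h
  unfold blockStart
  split_ifs <;> grind

theorem card_block {j : ℕ} (hj : j < ℓ) : #(block r ℓ k j) = r := by
  have : r * (j + 1) ≤ r * ℓ := Nat.mul_le_mul_left r hj
  have hsub : Ico (blockStart r k j) (blockStart r k j + r) ⊆ range (r * ℓ + 1) := by
    intro m
    simp only [mem_Ico, mem_range, blockStart]
    split_ifs <;> grind
  rw [block, Fin.card_filter_val (· ∈ Ico _ _), filter_mem_eq_inter, inter_eq_right.2 hsub,
    Nat.card_Ico, Nat.add_sub_cancel_left]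

theorem isNClique_block {j : ℕ} (hj : j < ℓ) : (chainGraph r ℓ).IsNClique r (block r ℓ k j) := by
  refine ⟨fun a ha b hb hab => ⟨hab, j, hj, ?_⟩, card_block hj⟩
  rw [mem_coe, mem_block, blockStart] at ha hb
  split_ifs at ha hb <;> grind

open Function in
theorem pairwise_disjoint_block : Pairwise (Disjoint on block r ℓ k) := by
  refine (pairwise_disjoint_on _).2 fun j₁ j₂ h => disjoint_left.2 fun v hv₁ hv₂ => ?_
  have := blockStart_add_le (r := r) (k := k) h
  rw [mem_block] at hv₁ hv₂
  omega

theorem notMem_block {v : Fin (r * ℓ + 1)} (hv : v.val = r * k) (j : ℕ) :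
    v ∉ block r ℓ k j := by
  rw [mem_block, blockStart, hv]
  split_ifs with hjk
  · have : r * (j + 1) ≤ r * k := Nat.mul_le_mul_left r hjk
    grind
  · have : r * k ≤ r * j := Nat.mul_le_mul_left r (not_lt.1 hjk)
    omega

theorem exists_mem_block (hr : 0 < r) (hk : k ≤ ℓ) {w : Fin (r * ℓ + 1)} (hw : w.val ≠ r * k) :
    ∃ j < ℓ, w ∈ block r ℓ k j := by
  rcases lt_or_gt_of_ne hw with hlt | hgt
  · have hj : w / r < k := (Nat.div_lt_iff_lt_mul hr).2 (by rwa [mul_comm k r])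
    refine ⟨w / r, by omega, mem_block.2 ?_⟩
    have := Nat.div_add_mod w r
    have := Nat.mod_lt w hr
    rw [blockStart, if_pos hj]
    omega
  · have hj : k ≤ (w - 1) / r := (Nat.le_div_iff_mul_le hr).2 (by rw [mul_comm k r]; omega)
    have hjℓ : (w - 1) / r < ℓ := (Nat.div_lt_iff_lt_mul hr).2 (by rw [mul_comm ℓ r]; omega)
    refine ⟨(w - 1) / r, hjℓ, mem_block.2 ?_⟩
    have := Nat.div_add_mod (w - 1) r
    have := Nat.mod_lt (w - 1) hr
    rw [blockStart, if_neg (not_lt.2 hj)]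
    omega

theorem biUnion_block (hr : 0 < r) {v : Fin (r * ℓ + 1)} (hv : v.val = r * k) :
    (range ℓ).biUnion (block r ℓ k) = univ.erase v := by
  have hk : k ≤ ℓ := (Nat.mul_le_mul_left_iff hr).1 (by omega)
  ext w
  simp only [mem_biUnion, mem_range, mem_erase, mem_univ, and_true]
  constructor
  · rintro ⟨j, -, hw⟩ rfl
    exact notMem_block hv j hw
  · intro hwv
    exact exists_mem_block hr hk fun h => hwv (Fin.ext (h.trans hv.symm))

end chainGraph

theorem statement_12 :
    ∀ r ℓ : ℕ, 3 ≤ r →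
      (chainR r ℓ).card = ℓ + 1 ∧
      ∀ v ∈ chainR r ℓ,
        HasKrFactorOn (chainGraph r ℓ) r (Finset.univ.erase v) := by
  intro r ℓ hr
  refine ⟨card_chainR (by omega), fun v hv => ?_⟩
  obtain ⟨k, hk⟩ := (mem_filter.1 hv).2
  rw [← chainGraph.biUnion_block (by omega) hk]
  exact hasKrFactorOn_biUnion (fun j hj => chainGraph.isNClique_block (mem_range.1 hj))
    (chainGraph.pairwise_disjoint_block.set_pairwise _)
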